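/- arXiv:2409.14957 — 3 statements merged into one kernel-verified Lean document; each statement's English description precedes it below -/
import Mathlib

section
/- Under the setting of the previous statement (a KKT point $(x^*,y^*)$ with multiplier $\bar\lambda$ for minimizing $f(x)+g(y)$ subject to $Ax+By=c$), suppose additionally that for some $\tilde\tau > 0$ and $\beta > 0$ a point $(x,y)$ satisfies $f(x) + g(y) + \tfrac{\beta}{2}\|Ax+By-c\|^2 - f(x^*) - g(y^*) \le \tilde\tau$. Then $\|Ax + By - c\| \le \frac{\|\bar\lambda\|}{\beta} + \sqrt{\frac{\|\bar\lambda\|^2}{\beta^2} + \frac{2\tilde\tau}{\beta}}$. -/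
open RealInnerProductSpace


lemma quad_aux_stmt5 (r l τ β : ℝ) (hr0 : 0 ≤ r) (hl0 : 0 ≤ l) (hτ : 0 < τ)
    (hβ : 0 < β) (hkey : β / 2 * r ^ 2 ≤ l * r + τ) :
    r ≤ l / β + Real.sqrt (l ^ 2 / β ^ 2 + 2 * τ / β) := by
  have harg : 0 ≤ l ^ 2 / β ^ 2 + 2 * τ / β := by positivity
  have hS0 : 0 ≤ Real.sqrt (l ^ 2 / β ^ 2 + 2 * τ / β) := Real.sqrt_nonneg _
  have hSsq : Real.sqrt (l ^ 2 / β ^ 2 + 2 * τ / β) ^ 2 = l ^ 2 / β ^ 2 + 2 * τ / β :=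
    Real.sq_sqrt harg
  set S := Real.sqrt (l ^ 2 / β ^ 2 + 2 * τ / β)
  by_contra hcon
  push_neg at hcon
  have h3 : S < r - l / β := by linarith
  have h4 : S ^ 2 < (r - l / β) ^ 2 := by nlinarith
  rw [hSsq] at h4
  have h5 : β * (l ^ 2 / β ^ 2 + 2 * τ / β) < β * (r - l / β) ^ 2 :=
    (mul_lt_mul_iff_right₀ hβ).mpr h4
  have e1 : β * (l ^ 2 / β ^ 2 + 2 * τ / β) = l ^ 2 / β + 2 * τ := by
    field_simp
  have e2 : β * (r - l / β) ^ 2 = β * r ^ 2 - 2 * l * r + l ^ 2 / β := by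
    field_simp; ring
  rw [e1, e2] at h5
  nlinarith [hkey]

/-- Feasibility-violation bound (Lemma 4.3): if `(x*,y*)` is a KKT point with
multiplier `λ̄` and `f(x)+g(y)+(β/2)‖Ax+By-c‖² - f(x*) - g(y*) ≤ τ̃`, then
`‖Ax+By-c‖ ≤ ‖λ̄‖/β + √(‖λ̄‖²/β² + 2τ̃/β)`. -/
theorem stmt_5 {E E₁ E₂ : Type*}
    [NormedAddCommGroup E] [InnerProductSpace ℝ E] [FiniteDimensional ℝ E]
    [NormedAddCommGroup E₁] [InnerProductSpace ℝ E₁] [FiniteDimensional ℝ E₁]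
    [NormedAddCommGroup E₂] [InnerProductSpace ℝ E₂] [FiniteDimensional ℝ E₂]
    (f : E₁ → EReal) (g : E₂ → EReal)
    (hfproper : ∀ x, f x ≠ ⊥) (hgproper : ∀ y, g y ≠ ⊥)
    (A : E₁ →L[ℝ] E) (B : E₂ →L[ℝ] E) (c : E)
    (xs : E₁) (ys : E₂) (hfeas : A xs + B ys = c)
    (hfs : f xs ≠ ⊤) (hgs : g ys ≠ ⊤)
    (lam : E)
    (hsubf : ∀ z : E₁,
      f z ≥ f xs + ((⟪-(ContinuousLinearMap.adjoint A) lam, z - xs⟫ : ℝ) : EReal))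
    (hsubg : ∀ z : E₂,
      g z ≥ g ys + ((⟪-(ContinuousLinearMap.adjoint B) lam, z - ys⟫ : ℝ) : EReal))
    (τ β : ℝ) (hτ : 0 < τ) (hβ : 0 < β) (x : E₁) (y : E₂)
    (hbound : f x + g y + (((β / 2) * ‖A x + B y - c‖ ^ 2 : ℝ) : EReal) ≤
      f xs + g ys + (τ : EReal)) :
    ‖A x + B y - c‖ ≤ ‖lam‖ / β + Real.sqrt (‖lam‖ ^ 2 / β ^ 2 + 2 * τ / β) := by

  set r := ‖A x + B y - c‖ with hr
  -- lift f xs, g ys to reals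
  lift f xs to ℝ using ⟨hfs, hfproper xs⟩ with as has
  lift g ys to ℝ using ⟨hgs, hgproper ys⟩ with bs hbs
  -- f x and g y are finite
  have hfx_ne_top : f x ≠ ⊤ := by
    intro h
    rw [h, EReal.top_add_of_ne_bot (hgproper y)] at hbound
    rw [EReal.top_add_of_ne_bot (EReal.coe_ne_bot _)] at hbound
    have : ((as : EReal) + bs + τ) < ⊤ := by
      rw [← EReal.coe_add, ← EReal.coe_add]; exact EReal.coe_lt_top _
    exact absurd hbound (not_le.mpr this)
  have hgy_ne_top : g y ≠ ⊤ := by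
    intro h
    rw [h, EReal.add_top_of_ne_bot (hfproper x)] at hbound
    rw [EReal.top_add_of_ne_bot (EReal.coe_ne_bot _)] at hbound
    have : ((as : EReal) + bs + τ) < ⊤ := by
      rw [← EReal.coe_add, ← EReal.coe_add]; exact EReal.coe_lt_top _
    exact absurd hbound (not_le.mpr this)
  lift f x to ℝ using ⟨hfx_ne_top, hfproper x⟩ with a ha
  lift g y to ℝ using ⟨hgy_ne_top, hgproper y⟩ with b hb
  -- turn hbound into a real inequality
  rw [← EReal.coe_add, ← EReal.coe_add, ← EReal.coe_add, ← EReal.coe_add,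
    EReal.coe_le_coe_iff] at hbound
  have h1 : as + (⟪-(ContinuousLinearMap.adjoint A) lam, x - xs⟫ : ℝ) ≤ a := by
    have := hsubf x
    rw [← ha, ← EReal.coe_add] at this
    exact_mod_cast this
  have h2 : bs + (⟪-(ContinuousLinearMap.adjoint B) lam, y - ys⟫ : ℝ) ≤ b := by
    have := hsubg y
    rw [← hb, ← EReal.coe_add] at this
    exact_mod_cast this
  have hinner : (⟪-(ContinuousLinearMap.adjoint A) lam, x - xs⟫ : ℝ)
      + (⟪-(ContinuousLinearMap.adjoint B) lam, y - ys⟫ : ℝ)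
      = -⟪lam, A x + B y - c⟫ := by
    rw [← hfeas]
    simp only [inner_neg_left, ContinuousLinearMap.adjoint_inner_left, map_sub,
      inner_sub_right, show A x + B y - (A xs + B ys) = (A x - A xs) + (B y - B ys) from by abel,
      inner_add_right]
    ring
  have hcs : -⟪lam, A x + B y - c⟫ ≥ -(‖lam‖ * r) := by
    have := real_inner_le_norm lam (A x + B y - c)
    linarith
  have hkey : (β / 2) * r ^ 2 ≤ ‖lam‖ * r + τ := by linarith
  exact quad_aux_stmt5 r ‖lam‖ τ β (norm_nonneg _) (norm_nonneg _) hτ hβ hkey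
end

section
/- Under the setting of the previous statement, one also has $|f(x) + g(y) - f(x^*) - g(y^*)| \le \max\Big\{\tilde\tau,\ \frac{\|\bar\lambda\|^2}{\beta} + \|\bar\lambda\|\sqrt{\frac{\|\bar\lambda\|^2}{\beta^2} + \frac{2\tilde\tau}{\beta}}\Big\}$. -/
open RealInnerProductSpace

/-- Objective-value-deviation bound (Lemma 4.3): under the same hypotheses as the
feasibility bound, `|f(x)+g(y) - f(x*) - g(y*)| ≤ max{τ̃, ‖λ̄‖²/β + ‖λ̄‖√(‖λ̄‖²/β² + 2τ̃/β)}`,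
stated as the corresponding two-sided inequality in the extended reals. -/
theorem stmt_6 {E E₁ E₂ : Type*}
    [NormedAddCommGroup E] [InnerProductSpace ℝ E] [FiniteDimensional ℝ E]
    [NormedAddCommGroup E₁] [InnerProductSpace ℝ E₁] [FiniteDimensional ℝ E₁]
    [NormedAddCommGroup E₂] [InnerProductSpace ℝ E₂] [FiniteDimensional ℝ E₂]
    (f : E₁ → EReal) (g : E₂ → EReal)
    (hfproper : ∀ x, f x ≠ ⊥) (hgproper : ∀ y, g y ≠ ⊥)
    (A : E₁ →L[ℝ] E) (B : E₂ →L[ℝ] E) (c : E)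
    (xs : E₁) (ys : E₂) (hfeas : A xs + B ys = c)
    (hfs : f xs ≠ ⊤) (hgs : g ys ≠ ⊤)
    (lam : E)
    (hsubf : ∀ z : E₁,
      f z ≥ f xs + ((⟪-(ContinuousLinearMap.adjoint A) lam, z - xs⟫ : ℝ) : EReal))
    (hsubg : ∀ z : E₂,
      g z ≥ g ys + ((⟪-(ContinuousLinearMap.adjoint B) lam, z - ys⟫ : ℝ) : EReal))
    (τ β : ℝ) (hτ : 0 < τ) (hβ : 0 < β) (x : E₁) (y : E₂)
    (hbound : f x + g y + (((β / 2) * ‖A x + B y - c‖ ^ 2 : ℝ) : EReal) ≤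
      f xs + g ys + (τ : EReal)) :
    f x + g y ≤ f xs + g ys +
        ((max τ (‖lam‖ ^ 2 / β + ‖lam‖ * Real.sqrt (‖lam‖ ^ 2 / β ^ 2 + 2 * τ / β)) : ℝ) :
          EReal) ∧
      f xs + g ys ≤ f x + g y +
        ((max τ (‖lam‖ ^ 2 / β + ‖lam‖ * Real.sqrt (‖lam‖ ^ 2 / β ^ 2 + 2 * τ / β)) : ℝ) :
          EReal) := by
  set M : ℝ := max τ (‖lam‖ ^ 2 / β + ‖lam‖ * Real.sqrt (‖lam‖ ^ 2 / β ^ 2 + 2 * τ / β)) with hM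
  set r : ℝ := ‖A x + B y - c‖ with hr
  have hr0 : 0 ≤ r := norm_nonneg _
  obtain ⟨as, has⟩ : ∃ a : ℝ, f xs = (a : EReal) :=
    ⟨(f xs).toReal, (EReal.coe_toReal hfs (hfproper xs)).symm⟩
  obtain ⟨bs, hbs⟩ : ∃ b : ℝ, g ys = (b : EReal) :=
    ⟨(g ys).toReal, (EReal.coe_toReal hgs (hgproper ys)).symm⟩
  rw [has, hbs] at hbound
  have hRHS : (as : EReal) + (bs : EReal) + (τ : EReal) = ((as + bs + τ : ℝ) : EReal) := by
    norm_cast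
  rw [hRHS] at hbound
  -- f x, g y are finite
  have hfxt : f x ≠ ⊤ := by
    intro h
    rw [h, EReal.top_add_of_ne_bot (hgproper y),
      EReal.top_add_of_ne_bot (EReal.coe_ne_bot _)] at hbound
    exact EReal.coe_ne_top _ (top_le_iff.mp hbound)
  have hgyt : g y ≠ ⊤ := by
    intro h
    rw [h, EReal.add_top_of_ne_bot (hfproper x),
      EReal.top_add_of_ne_bot (EReal.coe_ne_bot _)] at hbound
    exact EReal.coe_ne_top _ (top_le_iff.mp hbound)
  obtain ⟨a, ha⟩ : ∃ a : ℝ, f x = (a : EReal) :=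
    ⟨(f x).toReal, (EReal.coe_toReal hfxt (hfproper x)).symm⟩
  obtain ⟨b, hb⟩ : ∃ b : ℝ, g y = (b : EReal) :=
    ⟨(g y).toReal, (EReal.coe_toReal hgyt (hgproper y)).symm⟩
  rw [ha, hb] at hbound
  have hbound' : a + b + (β / 2) * r ^ 2 ≤ as + bs + τ := by exact_mod_cast hbound
  -- subgradient inequalities
  have hsx := hsubf x
  have hsy := hsubg y
  rw [ha, has] at hsx
  rw [hb, hbs] at hsy
  have hsx' : as + ⟪-(ContinuousLinearMap.adjoint A) lam, x - xs⟫ ≤ a := by exact_mod_cast hsx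
  have hsy' : bs + ⟪-(ContinuousLinearMap.adjoint B) lam, y - ys⟫ ≤ b := by exact_mod_cast hsy
  have hinner : ⟪-(ContinuousLinearMap.adjoint A) lam, x - xs⟫
      + ⟪-(ContinuousLinearMap.adjoint B) lam, y - ys⟫ = -⟪lam, A x + B y - c⟫ := by
    rw [inner_neg_left, inner_neg_left, ContinuousLinearMap.adjoint_inner_left,
      ContinuousLinearMap.adjoint_inner_left, ← hfeas]
    simp only [map_sub, inner_sub_right, inner_add_right]
    ring
  have hcs : |⟪lam, A x + B y - c⟫| ≤ ‖lam‖ * r := by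
    simpa [hr] using abs_real_inner_le_norm lam (A x + B y - c)
  have hlow : as + bs - ‖lam‖ * r ≤ a + b := by
    have := abs_le.mp hcs
    nlinarith [hsx', hsy', hinner]
  have hL0 : 0 ≤ ‖lam‖ := norm_nonneg _
  have hquad : (β / 2) * r ^ 2 - ‖lam‖ * r ≤ τ := by nlinarith
  set s : ℝ := Real.sqrt (‖lam‖ ^ 2 / β ^ 2 + 2 * τ / β) with hs
  have hs0 : 0 ≤ s := Real.sqrt_nonneg _
  have hs2 : s ^ 2 = ‖lam‖ ^ 2 / β ^ 2 + 2 * τ / β := by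
    rw [hs, Real.sq_sqrt]; positivity
  have h1 : (r - ‖lam‖ / β) ^ 2 ≤ s ^ 2 := by
    rw [hs2]
    have key : β * (r - ‖lam‖ / β) ^ 2 ≤ β * (‖lam‖ ^ 2 / β ^ 2 + 2 * τ / β) := by
      have e1 : β * (r - ‖lam‖ / β) ^ 2 = β * r ^ 2 - 2 * (‖lam‖ * r) + ‖lam‖ ^ 2 / β := by
        field_simp; ring
      have e2 : β * (‖lam‖ ^ 2 / β ^ 2 + 2 * τ / β) = ‖lam‖ ^ 2 / β + 2 * τ := by
        field_simp
      rw [e1, e2]; linarith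
    exact le_of_mul_le_mul_left key hβ
  have hrle : r ≤ ‖lam‖ / β + s := by
    have h2 : r - ‖lam‖ / β ≤ s := by
      have h3 := Real.sqrt_le_sqrt h1
      rw [Real.sqrt_sq_eq_abs, Real.sqrt_sq hs0] at h3
      exact le_trans (le_abs_self _) h3
    linarith
  have hLr : ‖lam‖ * r ≤ ‖lam‖ ^ 2 / β + ‖lam‖ * s := by
    have h4 := mul_le_mul_of_nonneg_left hrle hL0
    have h5 : ‖lam‖ * (‖lam‖ / β + s) = ‖lam‖ ^ 2 / β + ‖lam‖ * s := by ring
    linarith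
  rw [ha, hb, has, hbs]
  constructor
  · have h1 : a + b ≤ as + bs + M := by
      have hτM : τ ≤ M := le_max_left _ _
      nlinarith [sq_nonneg r]
    exact_mod_cast h1
  · have h2 : as + bs ≤ a + b + M := by
      have hM2 : ‖lam‖ ^ 2 / β + ‖lam‖ * s ≤ M := le_max_right _ _
      linarith
    exact_mod_cast h2
end

section
/- Let $\mu \in (0,1)$, $\widetilde H_0 > 0$, $M_f \ge 0$, and define $H_k = \widetilde H_0 k^{1-\mu}$ for $k \ge 1$ and $\zeta_k = -\frac{H_k}{2}d_k^2 + \frac{M_f}{\mu+1}d_k^{\mu+1}$ where $d_k \ge 0$ satisfies: $\zeta_k > 0$ implies $d_k \le \frac{1}{k}\left(\frac{2M_f}{(1+\mu)\widetilde H_0}\right)^{1/(1-\mu)}$. Then for every integer $t \ge 2$, $\frac{1}{t(t+1)}\sum_{k=1}^{t-1}(k+1)(k+2)\zeta_k \le \frac{\omega_0}{t^{\mu}}$, where $\omega_0 = 4\widetilde H_0\left(\frac{2M_f}{(1+\mu)\widetilde H_0}\right)^{2/(1-\mu)}$. -/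
/-!
Write `c = (2 M_f / ((1 + μ) H̃₀))^{1/(1-μ)}`, so that `M_f / (μ + 1) = (H̃₀ / 2) c^{1-μ}`.
A nonpositive `ζ_k` only helps; a positive one is at most `(M_f/(μ+1)) d_k^{μ+1}`, and
`d_k ≤ c / k` turns this into `(H̃₀ / 2) c² k^{-(1+μ)}`. With `(k+1)(k+2) ≤ 6k²` each weighted term
is at most `3 H̃₀ c² k^{1-μ} ≤ 3 H̃₀ c² t^{1-μ}`, and summing `t - 1` of them and dividing by
`t (t + 1)` leaves at most `3 H̃₀ c² / t^μ ≤ ω₀ / t^μ`.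
-/

open Real Finset

noncomputable def holderScale (μ H₀ Mf : ℝ) : ℝ :=
  (2 * Mf / ((1 + μ) * H₀)) ^ (1 / (1 - μ))

section HolderScale

variable {μ H₀ Mf : ℝ}

lemma holderScale_nonneg (hμ : -1 ≤ μ) (hH₀ : 0 ≤ H₀) (hMf : 0 ≤ Mf) :
    0 ≤ holderScale μ H₀ Mf :=
  rpow_nonneg (div_nonneg (by positivity) (mul_nonneg (by linarith) hH₀)) _

lemma holderScale_sq (hμ : -1 ≤ μ) (hH₀ : 0 ≤ H₀) (hMf : 0 ≤ Mf) :
    holderScale μ H₀ Mf ^ 2 = (2 * Mf / ((1 + μ) * H₀)) ^ (2 / (1 - μ)) := by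
  rw [holderScale, ← rpow_natCast,
    ← rpow_mul (div_nonneg (by positivity) (mul_nonneg (by linarith) hH₀))]
  congr 1
  push_cast
  ring

lemma div_add_one_eq_mul_holderScale_rpow (hμ : μ ∈ Set.Ioo (-1 : ℝ) 1) (hH₀ : 0 < H₀)
    (hMf : 0 ≤ Mf) : Mf / (μ + 1) = H₀ / 2 * holderScale μ H₀ Mf ^ (1 - μ) := by
  obtain ⟨hμ0, hμ1⟩ := hμ
  have h1μ : 0 < 1 + μ := by linarith
  have hμ1' : μ + 1 ≠ 0 := by linarith
  rw [holderScale, one_div, rpow_inv_rpow (by positivity) (by linarith)]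
  field_simp
  ring

lemma holder_term_le_of_le_div (hμ : μ ∈ Set.Ioo (-1 : ℝ) 1) (hH₀ : 0 < H₀) (hMf : 0 ≤ Mf)
    {k d : ℝ} (hk : 0 < k) (hd : 0 ≤ d) (hdk : d ≤ holderScale μ H₀ Mf / k) :
    -(H₀ * k ^ (1 - μ) / 2) * d ^ 2 + Mf / (μ + 1) * d ^ (μ + 1) ≤
      H₀ / 2 * holderScale μ H₀ Mf ^ 2 / k ^ (μ + 1) := by
  set c := holderScale μ H₀ Mf
  have hc : 0 ≤ c := holderScale_nonneg hμ.1.le hH₀.le hMf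
  have hμ0 : 0 ≤ μ + 1 := by linarith [hμ.1]
  have hquad : 0 ≤ H₀ * k ^ (1 - μ) / 2 * d ^ 2 := by positivity
  calc -(H₀ * k ^ (1 - μ) / 2) * d ^ 2 + Mf / (μ + 1) * d ^ (μ + 1)
      ≤ Mf / (μ + 1) * (c / k) ^ (μ + 1) := by
        have : d ^ (μ + 1) ≤ (c / k) ^ (μ + 1) := by gcongr
        have : 0 ≤ Mf / (μ + 1) := by positivity
        nlinarith
    _ = H₀ / 2 * (c ^ (1 - μ) * c ^ (μ + 1)) / k ^ (μ + 1) := by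
        rw [div_add_one_eq_mul_holderScale_rpow hμ hH₀ hMf, div_rpow hc hk.le]
        ring
    _ = H₀ / 2 * c ^ 2 / k ^ (μ + 1) := by
        rw [← rpow_add' hc (by ring_nf; norm_num), show 1 - μ + (μ + 1) = (2 : ℝ) by ring,
          rpow_two]

lemma weighted_holder_term_le (hμ : μ ∈ Set.Ioo (-1 : ℝ) 1) (hH₀ : 0 < H₀) (hMf : 0 ≤ Mf)
    {k d ζ : ℝ} (hk : 1 ≤ k) (hd : 0 ≤ d)
    (hζ : ζ = -(H₀ * k ^ (1 - μ) / 2) * d ^ 2 + Mf / (μ + 1) * d ^ (μ + 1))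
    (hdk : 0 < ζ → d ≤ holderScale μ H₀ Mf / k) :
    (k + 1) * (k + 2) * ζ ≤ 3 * (H₀ * holderScale μ H₀ Mf ^ 2) * k ^ (1 - μ) := by
  set c := holderScale μ H₀ Mf
  have hk0 : 0 < k := by linarith
  have hrhs : 0 ≤ 3 * (H₀ * c ^ 2) * k ^ (1 - μ) := by positivity
  rcases le_or_gt ζ 0 with hneg | hpos
  · exact (mul_nonpos_of_nonneg_of_nonpos (by positivity) hneg).trans hrhs
  have hζle : ζ ≤ H₀ / 2 * c ^ 2 / k ^ (μ + 1) :=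
    hζ ▸ holder_term_le_of_le_div hμ hH₀ hMf hk0 hd (hdk hpos)
  have hsq_div : k ^ 2 / k ^ (μ + 1) = k ^ (1 - μ) := by
    rw [← rpow_two, ← rpow_sub hk0]
    ring_nf
  calc (k + 1) * (k + 2) * ζ ≤ (k + 1) * (k + 2) * (H₀ / 2 * c ^ 2 / k ^ (μ + 1)) := by
        gcongr
    _ ≤ 6 * k ^ 2 * (H₀ / 2 * c ^ 2 / k ^ (μ + 1)) :=
        mul_le_mul_of_nonneg_right (by nlinarith) (by positivity)
    _ = 3 * (H₀ * c ^ 2) * (k ^ 2 / k ^ (μ + 1)) := by ring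
    _ = 3 * (H₀ * c ^ 2) * k ^ (1 - μ) := by rw [hsq_div]

end HolderScale

lemma one_div_mul_mul_rpow_one_sub_le {μ t s A : ℝ} (ht : 0 < t) (hs : s ≤ t) (hA : 0 ≤ A) :
    1 / (t * (t + 1)) * (s * (3 * A * t ^ (1 - μ))) ≤ 4 * A / t ^ μ := by
  calc 1 / (t * (t + 1)) * (s * (3 * A * t ^ (1 - μ))) = 3 * A * (s / (t + 1)) / t ^ μ := by
        rw [rpow_sub ht, rpow_one]
        field_simp
    _ ≤ 3 * A * 1 / t ^ μ := by
        gcongr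
        exact (div_le_one (by positivity)).mpr (by linarith)
    _ ≤ 4 * A / t ^ μ := div_le_div_of_nonneg_right (by linarith) (by positivity)

/-- Summation estimate (inequality (4.13) of the paper): with `H_k = H̃₀ k^{1-μ}` and
`ζ_k = -(H_k/2)d_k² + (M_f/(μ+1))d_k^{μ+1}`, where `ζ_k > 0` forces
`d_k ≤ (1/k)(2M_f/((1+μ)H̃₀))^{1/(1-μ)}`, one has for all `t ≥ 2`:
`(1/(t(t+1))) ∑_{k=1}^{t-1} (k+1)(k+2) ζ_k ≤ ω₀ / t^μ` with
`ω₀ = 4H̃₀ (2M_f/((1+μ)H̃₀))^{2/(1-μ)}`. -/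
theorem stmt_16 (μ H₀ Mf : ℝ) (hμ : μ ∈ Set.Ioo (0 : ℝ) 1) (hH₀ : 0 < H₀) (hMf : 0 ≤ Mf)
    (d : ℕ → ℝ) (hd : ∀ k : ℕ, 1 ≤ k → 0 ≤ d k)
    (H ζ : ℕ → ℝ)
    (hH : ∀ k : ℕ, 1 ≤ k → H k = H₀ * (k : ℝ) ^ (1 - μ))
    (hζ : ∀ k : ℕ, 1 ≤ k → ζ k = -(H k / 2) * d k ^ 2 + (Mf / (μ + 1)) * d k ^ (μ + 1))
    (hdk : ∀ k : ℕ, 1 ≤ k → 0 < ζ k →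
      d k ≤ (1 / (k : ℝ)) * (2 * Mf / ((1 + μ) * H₀)) ^ (1 / (1 - μ)))
    (ω₀ : ℝ) (hω₀ : ω₀ = 4 * H₀ * (2 * Mf / ((1 + μ) * H₀)) ^ (2 / (1 - μ))) :
    ∀ t : ℕ, 2 ≤ t →
      (1 / ((t : ℝ) * ((t : ℝ) + 1))) *
          ∑ k ∈ Finset.Icc 1 (t - 1), ((k : ℝ) + 1) * ((k : ℝ) + 2) * ζ k ≤
        ω₀ / (t : ℝ) ^ μ := by
  intro t ht
  have hμ' : μ ∈ Set.Ioo (-1 : ℝ) 1 := ⟨by linarith [hμ.1], hμ.2⟩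
  set c := holderScale μ H₀ Mf
  have hterm : ∀ k ∈ Icc 1 (t - 1),
      ((k : ℝ) + 1) * ((k : ℝ) + 2) * ζ k ≤ 3 * (H₀ * c ^ 2) * (t : ℝ) ^ (1 - μ) := by
    intro k hk
    obtain ⟨hk1, hkt⟩ := mem_Icc.mp hk
    have hk1' : (1 : ℝ) ≤ k := by exact_mod_cast hk1
    refine (weighted_holder_term_le hμ' hH₀ hMf hk1' (hd k hk1) (by rw [hζ k hk1, hH k hk1])
      fun hpos ↦ by rw [← one_div_mul_eq_div]; exact hdk k hk1 hpos).trans ?_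
    have : (k : ℝ) ≤ t := by exact_mod_cast hkt.trans (Nat.sub_le t 1)
    gcongr
    linarith [hμ.2]
  have hsum := sum_le_card_nsmul _ _ _ hterm
  rw [Nat.card_Icc, Nat.add_sub_cancel, nsmul_eq_mul] at hsum
  refine (mul_le_mul_of_nonneg_left hsum (by positivity)).trans ?_
  rw [hω₀, ← holderScale_sq hμ'.1.le hH₀.le hMf, mul_assoc 4 H₀]
  exact one_div_mul_mul_rpow_one_sub_le (by positivity) (Nat.cast_le.mpr (Nat.sub_le t 1))
    (by positivity)
end
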